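/- Let U ⊆ {(t,x) ∈ ℝ×ℝ² : |x| > 0, 1 + t − |x| > 0} be open, let v ∈ C^∞(U), and let g^{0i}, g^{ij} = g^{ji} (i,j ∈ {1,2}) be smooth real-valued functions on U, with g^{00} ≡ −1. Let W = e^{2(1+t−r)^{−1/2}} with r = |x|, and ω_i = x^i/r. Then the following ghost-weight divergence identity holds pointwise on U: W (∂_t v) ∑_{α,β=0}^{2} g^{αβ} ∂²_{αβ} v = ½ ∂_t{ W ( g^{00}(∂_t v)² − g^{ij} ∂_i v ∂_j v ) } + ∂_i{ W ( g^{0i}(∂_t v)² + g^{ij} ∂_t v ∂_j v ) } + W ( −(∂_i g^{0i})(∂_t v)² − (∂_i g^{ij}) ∂_t v ∂_j v + ½ (∂_t g^{ij}) ∂_i v ∂_j v ) + W (1+t−r)^{−3/2} ( ½ g^{00}(∂_t v)² − ½ g^{ij} ∂_i v ∂_j v − g^{0i} ω_i (∂_t v)² − g^{ij} ω_i (∂_t v)(∂_j v) ), with summation over repeated indices i,j ∈ {1,2}. -/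

import Mathlib

noncomputable section

open Real Set MeasureTheory

/-- Spacetime points `(x⁰, x¹, x²) ∈ ℝ³`. -/
abbrev Pt : Type := Fin 3 → ℝ

/-- Partial derivative `∂_α` in the `α`-th coordinate direction. -/
def pd (α : Fin 3) (f : Pt → ℝ) : Pt → ℝ :=
  fun x => fderiv ℝ f x (Pi.single α 1)

/-- Iterated partial derivatives `∂^κ` along a list of coordinate directions. -/
def pdI : List (Fin 3) → (Pt → ℝ) → (Pt → ℝ)
  | [], f => f
  | α :: κ, f => pd α (pdI κ f)

/-- Spatial radius `r = √((x¹)² + (x²)²)` of a spacetime point. -/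
def rad (x : Pt) : ℝ := Real.sqrt ((x 1) ^ 2 + (x 2) ^ 2)

/-- Radius of a spatial point `y ∈ ℝ²`. -/
def rad2 (y : Fin 2 → ℝ) : ℝ := Real.sqrt ((y 0) ^ 2 + (y 1) ^ 2)

/-- The spacetime point `(t, y¹, y²)`. -/
def mkPt (t : ℝ) (y : Fin 2 → ℝ) : Pt := Fin.cons t y

/-- The gradient `∂φ(x) = (∂₀φ, ∂₁φ, ∂₂φ)(x)`. -/
def grad (f : Pt → ℝ) (x : Pt) : Fin 3 → ℝ := fun α => pd α f x

/-- The rotation vector field `Ω = x¹∂₂ − x²∂₁`. -/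
def Omg (f : Pt → ℝ) : Pt → ℝ := fun x => x 1 * pd 2 f x - x 2 * pd 1 f x

/-- The radial derivative `∂_r = (x¹/r)∂₁ + (x²/r)∂₂`. -/
def Dr (f : Pt → ℝ) : Pt → ℝ :=
  fun x => (x 1 / rad x) * pd 1 f x + (x 2 / rad x) * pd 2 f x

/-- The outgoing null derivative `L = ∂_t + ∂_r`. -/
def Lout (f : Pt → ℝ) : Pt → ℝ := fun x => pd 0 f x + Dr f x

/-- The incoming null derivative `L̲ = ∂_t − ∂_r`. -/
def Lin (f : Pt → ℝ) : Pt → ℝ := fun x => pd 0 f x - Dr f x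

/-- The scaling field `S = t∂_t + x¹∂₁ + x²∂₂`. -/
def Sop (f : Pt → ℝ) : Pt → ℝ :=
  fun x => x 0 * pd 0 f x + x 1 * pd 1 f x + x 2 * pd 2 f x

/-- The Lorentz boosts `H_i = t∂_i + x^i∂_t`. -/
def Hop (i : Fin 3) (f : Pt → ℝ) : Pt → ℝ :=
  fun x => x 0 * pd i f x + x i * pd 0 f x

/-- The good derivatives `Z̃_i = ω_i ∂_t + ∂_i`. -/
def Ztil (i : Fin 3) (f : Pt → ℝ) : Pt → ℝ :=
  fun x => (x i / rad x) * pd 0 f x + pd i f x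

/-- The Minkowski coefficients `m^{αβ} = diag(−1,1,1)`. -/
def mink : Fin 3 → Fin 3 → ℝ :=
  fun α β => if α = β then (if α = 0 then -1 else 1) else 0

/-- The `k`-th order structure condition for the coefficients `g^{αβ}`, together with
the `k`-th null condition and the normalization `g^{00} ≡ −1`:
`g^{αβ}(q) = m^{αβ} + ∑ g^{αβ,γ₁⋯γ_k} q_{γ₁}⋯q_{γ_k} + O(|q|^{k+1})`,
the constants being symmetric in `(α,β)` and in `(γ₁,…,γ_k)`, and
`∑ g^{αβ,γ₁⋯γ_k} ξ_α ξ_β ξ_{γ₁}⋯ξ_{γ_k} = 0` whenever `ξ₀ = −1`, `ξ₁² + ξ₂² = 1`. -/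
def GoodCoeffs (k : ℕ) (g : (Fin 3 → ℝ) → Fin 3 → Fin 3 → ℝ) : Prop :=
  (∀ q α β, g q α β = g q β α) ∧
  (∀ α β, ContDiff ℝ (⊤ : ℕ∞) (fun q => g q α β)) ∧
  (∀ q, g q 0 0 = -1) ∧
  ∃ c : Fin 3 → Fin 3 → (Fin k → Fin 3) → ℝ,
    (∀ α β γ, c α β γ = c β α γ) ∧
    (∀ α β (γ : Fin k → Fin 3) (σ : Equiv.Perm (Fin k)), c α β (γ ∘ σ) = c α β γ) ∧
    (∃ C > (0:ℝ), ∃ ε > (0:ℝ), ∀ q : Fin 3 → ℝ, ‖q‖ ≤ ε → ∀ α β,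
        |g q α β - mink α β - ∑ γ : Fin k → Fin 3, c α β γ * ∏ i, q (γ i)|
          ≤ C * ‖q‖ ^ (k + 1)) ∧
    (∀ ξ : Fin 3 → ℝ, ξ 0 = -1 → (ξ 1) ^ 2 + (ξ 2) ^ 2 = 1 →
        ∑ α, ∑ β, ∑ γ : Fin k → Fin 3, c α β γ * ξ α * ξ β * ∏ i, ξ (γ i) = 0)

/-- A short pulse profile: a smooth function of `(s, ω) ∈ ℝ × ℝ²` (restricted to
`ω ∈ S¹`) with compact support in `s ∈ (−1, 0)`. -/
def PulseProfile (ψ : ℝ → (Fin 2 → ℝ) → ℝ) : Prop :=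
  ContDiff ℝ (⊤ : ℕ∞) (Function.uncurry ψ) ∧
  ∀ s ω, s ∉ Set.Ioo (-1 : ℝ) 0 → ψ s ω = 0

/-- The short pulse `δ^a ψ((r−1)/δ, ω)` as a function of the spacetime point. -/
def pulse (δ a : ℝ) (ψ : ℝ → (Fin 2 → ℝ) → ℝ) (x : Pt) : ℝ :=
  δ ^ a * ψ ((rad x - 1) / δ) (fun i => x i.succ / rad x)

/-- The first order outgoing constraint condition on the short pulse data:
`|(∂_t + ∂_r)φ(1,x)| ≤ C δ^{2−ε₀}` with `C` independent of `δ`. -/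
def OutgoingData (ε₀ : ℝ) (φ₀ φ₁ : ℝ → (Fin 2 → ℝ) → ℝ) : Prop :=
  ∃ C > (0:ℝ), ∀ δ : ℝ, 0 < δ → δ ≤ 1 → ∀ x : Pt,
    |pulse δ (1 - ε₀) φ₁ x + Dr (pulse δ (2 - ε₀) φ₀) x| ≤ C * δ ^ (2 - ε₀)

/-- The short pulse initial conditions
`φ(1,x) = δ^{2−ε₀} φ₀((r−1)/δ, ω)`, `∂_tφ(1,x) = δ^{1−ε₀} φ₁((r−1)/δ, ω)`. -/
def InitData (δ ε₀ : ℝ) (φ₀ φ₁ : ℝ → (Fin 2 → ℝ) → ℝ) (φ : Pt → ℝ) : Prop :=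
  (∀ x : Pt, x 0 = 1 → φ x = pulse δ (2 - ε₀) φ₀ x) ∧
  (∀ x : Pt, x 0 = 1 → pd 0 φ x = pulse δ (1 - ε₀) φ₁ x)

/-- Apply a word of vector fields taken from the family `V`. -/
def applyW {m : ℕ} (V : Fin m → (Pt → ℝ) → (Pt → ℝ)) :
    List (Fin m) → (Pt → ℝ) → (Pt → ℝ)
  | [], f => f
  | j :: w, f => V j (applyW V w f)

/-- The Klainerman fields `Γ̄ ∈ {S, H₁, H₂, Ω}`. -/
def KV : Fin 4 → (Pt → ℝ) → (Pt → ℝ) := ![Sop, Hop 1, Hop 2, Omg]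

/-- The fields `Γ̃ ∈ {∂₀, ∂₁, ∂₂, S, H₁, H₂}`. -/
def GV : Fin 6 → (Pt → ℝ) → (Pt → ℝ) := ![pd 0, pd 1, pd 2, Sop, Hop 1, Hop 2]

/-- The `L²` norm of a function over a spatial region. -/
def l2norm (A : Set (Fin 2 → ℝ)) (F : (Fin 2 → ℝ) → ℝ) : ℝ :=
  Real.sqrt (∫ y in A, (F y) ^ 2)

/-- `|∂f|²`, the squared length of the full spacetime gradient. -/
def gradSq (f : Pt → ℝ) (x : Pt) : ℝ := ∑ α : Fin 3, (pd α f x) ^ 2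

/-- The weighted energies `E_{p,l}(t)` inside the cone, with ghost-weighted
spacetime integral. -/
def Energy (δ t₀ : ℝ) (φ : Pt → ℝ) (p l : ℕ) (t : ℝ) : ℝ :=
  ∑ w : Fin p → Fin 6,
    ((∫ y in {y : Fin 2 → ℝ | 2 * δ ≤ t - rad2 y},
        gradSq (applyW GV (List.ofFn w) (Omg^[l] φ)) (mkPt t y)) +
      ∑ i ∈ ({1, 2} : Finset (Fin 3)),
        ∫ z in {z : Pt | t₀ ≤ z 0 ∧ z 0 ≤ t ∧ 2 * δ ≤ z 0 - rad z},
          (Ztil i (applyW GV (List.ofFn w) (Omg^[l] φ)) z) ^ 2 /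
            (1 + (z 0 - rad z) ^ ((3 : ℝ) / 2)))

/-- The bootstrap exponents for the energies `E_{p,l}`. -/
def expo (ε₀ : ℝ) : ℕ → ℝ
  | 0 => 4 - 2 * ε₀
  | 1 => 17 / 6 - 2 * ε₀
  | 2 => 1 - 2 * ε₀
  | 3 => -1 - 2 * ε₀
  | _ => -3 - 2 * ε₀

/-- The coefficient matrix `(g^{αβ}(q))`. -/
def gmat (g : (Fin 3 → ℝ) → Fin 3 → Fin 3 → ℝ) (q : Fin 3 → ℝ) :
    Matrix (Fin 3) (Fin 3) ℝ := Matrix.of fun α β => g q α β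

/-- The inverse matrix `(g_{αβ}(q))` of `(g^{αβ}(q))`. -/
def glow (g : (Fin 3 → ℝ) → Fin 3 → Fin 3 → ℝ) (q : Fin 3 → ℝ) :
    Matrix (Fin 3) (Fin 3) ℝ := (gmat g q)⁻¹

/-- `G^γ_{αβ} = (∂ g_{αβ}/∂q_γ)(∂φ)`. -/
def Gc (g : (Fin 3 → ℝ) → Fin 3 → Fin 3 → ℝ) (φ : Pt → ℝ) (γ α β : Fin 3) (x : Pt) : ℝ :=
  fderiv ℝ (fun q => glow g q α β) (grad φ x) (Pi.single γ 1)

/-- `(∂ g^{αβ}/∂q_ν)(∂φ)`. -/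
def dgUp (g : (Fin 3 → ℝ) → Fin 3 → Fin 3 → ℝ) (φ : Pt → ℝ) (ν α β : Fin 3) (x : Pt) : ℝ :=
  fderiv ℝ (fun q => g q α β) (grad φ x) (Pi.single ν 1)

/-- The action of a vector field (given by its components) on a function. -/
def vfd (V : Pt → Fin 3 → ℝ) (f : Pt → ℝ) (x : Pt) : ℝ := ∑ β, V x β * pd β f x

/-- The inverse foliation density `μ = −(∑ g^{α0}(∂φ) ∂_α u)⁻¹`. -/
def muf (g : (Fin 3 → ℝ) → Fin 3 → Fin 3 → ℝ) (φ u : Pt → ℝ) (x : Pt) : ℝ :=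
  -(∑ α, g (grad φ x) α 0 * pd α u x)⁻¹

/-- The components of `L̊`: `L̊^β = −μ ∑_α g^{αβ}(∂φ) ∂_α u`. -/
def Lvec (g : (Fin 3 → ℝ) → Fin 3 → Fin 3 → ℝ) (φ u : Pt → ℝ) (x : Pt) : Fin 3 → ℝ :=
  fun β => -(muf g φ u x) * ∑ α, g (grad φ x) α β * pd α u x

/-- The components of `T̃`: `T̃^β = −g^{0β}(∂φ) − L̊^β`. -/
def Ttvec (g : (Fin 3 → ℝ) → Fin 3 → Fin 3 → ℝ) (φ u : Pt → ℝ) (x : Pt) : Fin 3 → ℝ :=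
  fun β => -(g (grad φ x) 0 β) - Lvec g φ u x β

/-- The components of `T = μ T̃`. -/
def Tvec (g : (Fin 3 → ℝ) → Fin 3 → Fin 3 → ℝ) (φ u : Pt → ℝ) (x : Pt) : Fin 3 → ℝ :=
  fun β => muf g φ u x * Ttvec g φ u x β

/-- `G^γ_{VW} = ∑ G^γ_{αβ} V^α W^β`. -/
def Gpair (g : (Fin 3 → ℝ) → Fin 3 → Fin 3 → ℝ) (φ : Pt → ℝ) (γ : Fin 3)
    (V W : Pt → Fin 3 → ℝ) (x : Pt) : ℝ :=
  ∑ α, ∑ β, Gc g φ γ α β x * V x α * W x β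

/-- The Christoffel symbols `Γ^γ_{αβ}` of the metric `g(∂φ)`. -/
def Gamma (g : (Fin 3 → ℝ) → Fin 3 → Fin 3 → ℝ) (φ : Pt → ℝ) (γ α β : Fin 3) (x : Pt) : ℝ :=
  (1/2) * ∑ κ, ∑ ν, g (grad φ x) γ κ *
    (Gc g φ ν κ β x * pd α (pd ν φ) x + Gc g φ ν α κ x * pd β (pd ν φ) x
      - Gc g φ ν α β x * pd κ (pd ν φ) x)

/-- The reduced covariant wave operator `□_g ψ = g^{αβ}∂²_{αβ}ψ − g^{αβ}Γ^λ_{αβ}∂_λψ`. -/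
def boxg (g : (Fin 3 → ℝ) → Fin 3 → Fin 3 → ℝ) (φ ψ : Pt → ℝ) (x : Pt) : ℝ :=
  (∑ α, ∑ β, g (grad φ x) α β * pd α (pd β ψ) x)
    - ∑ α, ∑ β, ∑ lam, g (grad φ x) α β * Gamma g φ lam α β x * pd lam ψ x

/-- Multi-index derivatives over `{∂_t, ∂_r}`: `0 ↦ ∂_t`, `1 ↦ ∂_r`. -/
def pdBar : List (Fin 2) → (Pt → ℝ) → (Pt → ℝ)
  | [], f => f
  | i :: ι, f => if i = 0 then pd 0 (pdBar ι f) else Dr (pdBar ι f)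

/-- `Q = −½(∂_tφ)² + ½|∇_xφ|²`. -/
def Qfun (φ : Pt → ℝ) (y : Pt) : ℝ :=
  -(pd 0 φ y) ^ 2 / 2 + ((pd 1 φ y) ^ 2 + (pd 2 φ y) ^ 2) / 2

/-- Alinhac's ghost weight `W = e^{2(1+t−r)^{−1/2}}`. -/
def Wgt (x : Pt) : ℝ := Real.exp (2 * (1 + x 0 - rad x) ^ (-(1:ℝ)/2))



section GhostHelpers

private lemma pd_mul' {f g : Pt → ℝ} {x : Pt} (hf : DifferentiableAt ℝ f x)
    (hg : DifferentiableAt ℝ g x) (α : Fin 3) :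
    pd α (fun y => f y * g y) x = pd α f x * g x + f x * pd α g x := by
  simp only [pd, fderiv_fun_mul hf hg, ContinuousLinearMap.add_apply,
    ContinuousLinearMap.smul_apply, smul_eq_mul]
  ring

private lemma pd_sub' {f g : Pt → ℝ} {x : Pt} (hf : DifferentiableAt ℝ f x)
    (hg : DifferentiableAt ℝ g x) (α : Fin 3) :
    pd α (fun y => f y - g y) x = pd α f x - pd α g x := by
  simp only [pd, fderiv_fun_sub hf hg, ContinuousLinearMap.sub_apply]

private lemma pd_add' {f g : Pt → ℝ} {x : Pt} (hf : DifferentiableAt ℝ f x)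
    (hg : DifferentiableAt ℝ g x) (α : Fin 3) :
    pd α (fun y => f y + g y) x = pd α f x + pd α g x := by
  simp only [pd, fderiv_fun_add hf hg, ContinuousLinearMap.add_apply]

private lemma pd_sq' {f : Pt → ℝ} {x : Pt} (hf : DifferentiableAt ℝ f x) (α : Fin 3) :
    pd α (fun y => f y ^ 2) x = 2 * f x * pd α f x := by
  have h : (fun y => f y ^ 2) = fun y => f y * f y := by funext y; ring
  rw [h, pd_mul' hf hf]; ring

private lemma pd_mul3' {f g h : Pt → ℝ} {x : Pt} (hf : DifferentiableAt ℝ f x)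
    (hg : DifferentiableAt ℝ g x) (hh : DifferentiableAt ℝ h x) (α : Fin 3) :
    pd α (fun y => f y * g y * h y) x
      = pd α f x * g x * h x + f x * pd α g x * h x + f x * g x * pd α h x := by
  have h1 := pd_mul' (hf.fun_mul hg) hh α
  rw [pd_mul' hf hg α] at h1
  simpa using h1.trans (by ring)

private lemma pd_sum' {s : Finset (Fin 3)} {F : Fin 3 → Pt → ℝ} {x : Pt}
    (h : ∀ i ∈ s, DifferentiableAt ℝ (F i) x) (α : Fin 3) :
    pd α (fun y => ∑ i ∈ s, F i y) x = ∑ i ∈ s, pd α (F i) x := by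
  simp only [pd, fderiv_fun_sum h, ContinuousLinearMap.sum_apply]

private lemma pd_const' {x : Pt} (c : ℝ) (α : Fin 3) :
    pd α (fun _ : Pt => c) x = 0 := by
  simp [pd]

private lemma pd_comm' {f : Pt → ℝ} {x : Pt} (hf : ContDiffAt ℝ (⊤ : ℕ∞) f x) (α β : Fin 3) :
    pd α (pd β f) x = pd β (pd α f) x := by
  have hd : DifferentiableAt ℝ (fderiv ℝ f) x :=
    (hf.fderiv_right (m := (⊤ : ℕ∞)) (by exact_mod_cast le_top)).differentiableAt
      (by simp)
  have hsymm : IsSymmSndFDerivAt ℝ f x :=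
    hf.isSymmSndFDerivAt (by rw [minSmoothness_of_isRCLikeNormedField]; exact WithTop.coe_le_coe.mpr le_top)
  have key : ∀ γ δ : Fin 3, pd γ (pd δ f) x
      = fderiv ℝ (fderiv ℝ f) x (Pi.single γ 1) (Pi.single δ 1) := by
    intro γ δ
    rw [show pd γ (pd δ f) x
        = fderiv ℝ (fun y => (fderiv ℝ f y) (Pi.single δ 1)) x (Pi.single γ 1) from rfl]
    rw [fderiv_clm_apply hd (differentiableAt_const _)]
    simp
  rw [key, key, hsymm]

private lemma pd_diff' {f : Pt → ℝ} {x : Pt} (hf : ContDiffAt ℝ (⊤ : ℕ∞) f x) (β : Fin 3) :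
    DifferentiableAt ℝ (pd β f) x := by
  have hd : ContDiffAt ℝ (⊤ : ℕ∞) (fderiv ℝ f) x :=
    hf.fderiv_right (m := (⊤ : ℕ∞)) (by exact_mod_cast le_top)
  have h : pd β f = fun y => (fderiv ℝ f y) (Pi.single β 1) := rfl
  rw [h]
  exact (hd.clm_apply contDiffAt_const).differentiableAt (by simp)

private abbrev projP (i : Fin 3) : Pt →L[ℝ] ℝ :=
  ContinuousLinearMap.proj (R := ℝ) (φ := fun _ : Fin 3 => ℝ) i

private lemma wgt_pd {x : Pt} (hr : 0 < rad x) (hu : 0 < 1 + x 0 - rad x) :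
    DifferentiableAt ℝ Wgt x ∧
    pd 0 Wgt x = -(Wgt x * (1 + x 0 - rad x) ^ (-(3:ℝ)/2)) ∧
    pd 1 Wgt x = Wgt x * (1 + x 0 - rad x) ^ (-(3:ℝ)/2) * (x 1 / rad x) ∧
    pd 2 Wgt x = Wgt x * (1 + x 0 - rad x) ^ (-(3:ℝ)/2) * (x 2 / rad x) := by
  have hs : 0 < (x 1) ^ 2 + (x 2) ^ 2 := Real.sqrt_pos.mp hr
  have hp1 : HasFDerivAt (fun y : Pt => y 1) (projP 1) x := hasFDerivAt_apply (𝕜 := ℝ) 1 x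
  have hp2 : HasFDerivAt (fun y : Pt => y 2) (projP 2) x := hasFDerivAt_apply (𝕜 := ℝ) 2 x
  have hp0 : HasFDerivAt (fun y : Pt => y 0) (projP 0) x := hasFDerivAt_apply (𝕜 := ℝ) 0 x
  have hsum : HasFDerivAt (fun y : Pt => (y 1) ^ 2 + (y 2) ^ 2)
      (x 1 • projP 1 + x 1 • projP 1 + (x 2 • projP 2 + x 2 • projP 2)) x := by
    have h := (hp1.fun_mul hp1).fun_add (hp2.fun_mul hp2)
    have e : (fun y : Pt => y 1 * y 1 + y 2 * y 2)
        = (fun y : Pt => (y 1) ^ 2 + (y 2) ^ 2) := by funext y; ring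
    rwa [e] at h
  have hsqrt : HasDerivAt Real.sqrt (1 / (2 * Real.sqrt ((x 1) ^ 2 + (x 2) ^ 2)))
      ((x 1) ^ 2 + (x 2) ^ 2) := Real.hasDerivAt_sqrt hs.ne'
  have hrad : HasFDerivAt rad
      ((1 / (2 * rad x)) • (x 1 • projP 1 + x 1 • projP 1 + (x 2 • projP 2 + x 2 • projP 2))) x :=
    hsqrt.comp_hasFDerivAt x hsum
  have hlin : HasFDerivAt (fun y : Pt => 1 + y 0 - rad y)
      (((0 : Pt →L[ℝ] ℝ) + projP 0)
        - (1 / (2 * rad x)) • (x 1 • projP 1 + x 1 • projP 1 + (x 2 • projP 2 + x 2 • projP 2))) x :=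
    ((hasFDerivAt_const (1:ℝ) x).add hp0).sub hrad
  have hrpow : HasDerivAt (fun s : ℝ => 2 * s ^ (-(1:ℝ)/2))
      (2 * (-(1:ℝ)/2 * (1 + x 0 - rad x) ^ (-(1:ℝ)/2 - 1))) (1 + x 0 - rad x) :=
    (Real.hasDerivAt_rpow_const (Or.inl hu.ne')).const_mul 2
  have hexp : HasDerivAt Real.exp (Real.exp (2 * (1 + x 0 - rad x) ^ (-(1:ℝ)/2)))
      (2 * (1 + x 0 - rad x) ^ (-(1:ℝ)/2)) := Real.hasDerivAt_exp _
  have hW : HasFDerivAt Wgt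
      ((Real.exp (2 * (1 + x 0 - rad x) ^ (-(1:ℝ)/2)) *
          (2 * (-(1:ℝ)/2 * (1 + x 0 - rad x) ^ (-(1:ℝ)/2 - 1)))) •
        (((0 : Pt →L[ℝ] ℝ) + projP 0)
          - (1 / (2 * rad x)) • (x 1 • projP 1 + x 1 • projP 1
              + (x 2 • projP 2 + x 2 • projP 2)))) x :=
    by have := (hexp.comp (1 + x 0 - rad x) hrpow).comp_hasFDerivAt x hlin; exact this
  have hWd : DifferentiableAt ℝ Wgt x := hW.differentiableAt
  have hfd := hW.fderiv
  have hexpo : (-(1:ℝ)/2 - 1) = -(3:ℝ)/2 := by norm_num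
  have hW' : Wgt x = Real.exp (2 * (1 + x 0 - rad x) ^ (-(1:ℝ)/2)) := rfl
  have hrne : rad x ≠ 0 := hr.ne'
  refine ⟨hWd, ?_, ?_, ?_⟩ <;>
  · simp only [pd, hfd, hexpo, ContinuousLinearMap.smul_apply, ContinuousLinearMap.sub_apply,
      ContinuousLinearMap.add_apply, ContinuousLinearMap.zero_apply,
      ContinuousLinearMap.proj_apply, smul_eq_mul, Pi.single_apply, Fin.reduceEq,
      reduceIte, if_true, if_false]
    rw [← hW']
    field_simp
    ring

end GhostHelpers

/-- Alinhac's ghost weight divergence identity: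
`W(∂_tv) g^{αβ}∂²_{αβ}v = ½∂_t{W(g^{00}(∂_tv)² − g^{ij}∂_iv∂_jv)}
  + ∂_i{W(g^{0i}(∂_tv)² + g^{ij}∂_tv∂_jv)}
  + W(−(∂_ig^{0i})(∂_tv)² − (∂_ig^{ij})∂_tv∂_jv + ½(∂_tg^{ij})∂_iv∂_jv)
  + W(1+t−r)^{−3/2}(½g^{00}(∂_tv)² − ½g^{ij}∂_iv∂_jv − g^{0i}ω_i(∂_tv)²
      − g^{ij}ω_i∂_tv∂_jv)`. -/
theorem statement18
    (U : Set Pt) (hU : IsOpen U)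
    (hUsub : U ⊆ {x : Pt | 0 < rad x ∧ 0 < 1 + x 0 - rad x})
    (v : Pt → ℝ) (hv : ContDiffOn ℝ (⊤ : ℕ∞) v U)
    (G : Fin 3 → Fin 3 → Pt → ℝ)
    (hGsym : ∀ (i j : Fin 3) (x : Pt), G i j x = G j i x)
    (hG00 : ∀ x : Pt, G 0 0 x = -1)
    (hGsmooth : ∀ i j, ContDiffOn ℝ (⊤ : ℕ∞) (G i j) U) :
    ∀ x ∈ U,
      Wgt x * pd 0 v x *
        (G 0 0 x * pd 0 (pd 0 v) x
          + 2 * ∑ i ∈ ({1, 2} : Finset (Fin 3)), G 0 i x * pd 0 (pd i v) x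
          + ∑ i ∈ ({1, 2} : Finset (Fin 3)), ∑ j ∈ ({1, 2} : Finset (Fin 3)),
              G i j x * pd i (pd j v) x)
      =
      (1/2) * pd 0 (fun y => Wgt y * (G 0 0 y * (pd 0 v y) ^ 2
          - ∑ i ∈ ({1, 2} : Finset (Fin 3)), ∑ j ∈ ({1, 2} : Finset (Fin 3)),
              G i j y * pd i v y * pd j v y)) x
      + (∑ i ∈ ({1, 2} : Finset (Fin 3)),
          pd i (fun y => Wgt y * (G 0 i y * (pd 0 v y) ^ 2
            + ∑ j ∈ ({1, 2} : Finset (Fin 3)), G i j y * pd 0 v y * pd j v y)) x)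
      + Wgt x * (-(∑ i ∈ ({1, 2} : Finset (Fin 3)), pd i (G 0 i) x) * (pd 0 v x) ^ 2
          - (∑ i ∈ ({1, 2} : Finset (Fin 3)), ∑ j ∈ ({1, 2} : Finset (Fin 3)),
              pd i (G i j) x * pd 0 v x * pd j v x)
          + (1/2) * ∑ i ∈ ({1, 2} : Finset (Fin 3)), ∑ j ∈ ({1, 2} : Finset (Fin 3)),
              pd 0 (G i j) x * pd i v x * pd j v x)
      + Wgt x * (1 + x 0 - rad x) ^ (-(3:ℝ)/2) *
          ((1/2) * G 0 0 x * (pd 0 v x) ^ 2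
            - (1/2) * ∑ i ∈ ({1, 2} : Finset (Fin 3)), ∑ j ∈ ({1, 2} : Finset (Fin 3)),
                G i j x * pd i v x * pd j v x
            - (∑ i ∈ ({1, 2} : Finset (Fin 3)), G 0 i x * (x i / rad x) * (pd 0 v x) ^ 2)
            - ∑ i ∈ ({1, 2} : Finset (Fin 3)), ∑ j ∈ ({1, 2} : Finset (Fin 3)),
                G i j x * (x i / rad x) * pd 0 v x * pd j v x) := by
  intro x hx
  obtain ⟨hr, hup⟩ := hUsub hx
  have hmem : U ∈ nhds x := hU.mem_nhds hx
  have hvx : ContDiffAt ℝ (⊤ : ℕ∞) v x := hv.contDiffAt hmem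
  have hGx : ∀ i j, DifferentiableAt ℝ (G i j) x := fun i j =>
    ((hGsmooth i j).contDiffAt hmem).differentiableAt (by simp)
  have hpv : ∀ β, DifferentiableAt ℝ (pd β v) x := pd_diff' hvx
  obtain ⟨hWd, hW0, hW1, hW2⟩ := wgt_pd hr hup
  have hG00f : G 0 0 = fun _ : Pt => (-1 : ℝ) := funext hG00
  have hG00c : ∀ α : Fin 3, pd α (G 0 0) x = 0 := by
    intro α; rw [hG00f]; exact pd_const' _ α
  have hG21 : G 2 1 = G 1 2 := funext (hGsym 2 1)
  have hcomm : ∀ i : Fin 3, pd i (pd 0 v) x = pd 0 (pd i v) x := fun i => pd_comm' hvx i 0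
  have hprod : ∀ i j : Fin 3, DifferentiableAt ℝ (fun y => G i j y * pd i v y * pd j v y) x :=
    fun i j => ((hGx i j).mul (hpv i)).mul (hpv j)
  have hprod0 : ∀ i j : Fin 3, DifferentiableAt ℝ (fun y => G i j y * pd 0 v y * pd j v y) x :=
    fun i j => ((hGx i j).mul (hpv 0)).mul (hpv j)
  have hsq : DifferentiableAt ℝ (fun y => (pd 0 v y) ^ 2) x := (hpv 0).pow 2
  have hS : DifferentiableAt ℝ
      (fun y => ∑ i ∈ ({1, 2} : Finset (Fin 3)), ∑ j ∈ ({1, 2} : Finset (Fin 3)),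
        G i j y * pd i v y * pd j v y) x :=
    DifferentiableAt.fun_sum fun i _ => DifferentiableAt.fun_sum fun j _ => hprod i j
  have keyA : pd 0 (fun y => Wgt y * (G 0 0 y * (pd 0 v y) ^ 2
        - ∑ i ∈ ({1, 2} : Finset (Fin 3)), ∑ j ∈ ({1, 2} : Finset (Fin 3)),
            G i j y * pd i v y * pd j v y)) x
      = pd 0 Wgt x * (G 0 0 x * (pd 0 v x) ^ 2
          - ∑ i ∈ ({1, 2} : Finset (Fin 3)), ∑ j ∈ ({1, 2} : Finset (Fin 3)),
              G i j x * pd i v x * pd j v x)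
        + Wgt x * ((pd 0 (G 0 0) x * (pd 0 v x) ^ 2
            + G 0 0 x * (2 * pd 0 v x * pd 0 (pd 0 v) x))
          - ∑ i ∈ ({1, 2} : Finset (Fin 3)), ∑ j ∈ ({1, 2} : Finset (Fin 3)),
              (pd 0 (G i j) x * pd i v x * pd j v x
                + G i j x * pd 0 (pd i v) x * pd j v x
                + G i j x * pd i v x * pd 0 (pd j v) x)) := by
    rw [pd_mul' hWd (((hGx 0 0).fun_mul hsq).fun_sub hS)]
    congr 2
    rw [pd_sub' ((hGx 0 0).fun_mul hsq) hS, pd_mul' (hGx 0 0) hsq, pd_sq' (hpv 0)]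
    congr 1
    rw [pd_sum' (fun i _ => DifferentiableAt.fun_sum fun j _ => hprod i j)]
    refine Finset.sum_congr rfl fun i _ => ?_
    rw [pd_sum' (fun j _ => hprod i j)]
    exact Finset.sum_congr rfl fun j _ => pd_mul3' (hGx i j) (hpv i) (hpv j) 0
  have keyB : (∑ i ∈ ({1, 2} : Finset (Fin 3)),
        pd i (fun y => Wgt y * (G 0 i y * (pd 0 v y) ^ 2
          + ∑ j ∈ ({1, 2} : Finset (Fin 3)), G i j y * pd 0 v y * pd j v y)) x)
      = ∑ i ∈ ({1, 2} : Finset (Fin 3)),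
          (pd i Wgt x * (G 0 i x * (pd 0 v x) ^ 2
              + ∑ j ∈ ({1, 2} : Finset (Fin 3)), G i j x * pd 0 v x * pd j v x)
            + Wgt x * ((pd i (G 0 i) x * (pd 0 v x) ^ 2
                + G 0 i x * (2 * pd 0 v x * pd i (pd 0 v) x))
              + ∑ j ∈ ({1, 2} : Finset (Fin 3)),
                  (pd i (G i j) x * pd 0 v x * pd j v x
                    + G i j x * pd i (pd 0 v) x * pd j v x
                    + G i j x * pd 0 v x * pd i (pd j v) x))) := by
    refine Finset.sum_congr rfl fun i _ => ?_
    have hBi : DifferentiableAt ℝ (fun y => G 0 i y * (pd 0 v y) ^ 2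
        + ∑ j ∈ ({1, 2} : Finset (Fin 3)), G i j y * pd 0 v y * pd j v y) x :=
      ((hGx 0 i).fun_mul hsq).fun_add (DifferentiableAt.fun_sum fun j _ => hprod0 i j)
    rw [pd_mul' hWd hBi]
    congr 2
    rw [pd_add' ((hGx 0 i).fun_mul hsq) (DifferentiableAt.fun_sum fun j _ => hprod0 i j),
      pd_mul' (hGx 0 i) hsq, pd_sq' (hpv 0)]
    congr 1
    rw [pd_sum' (fun j _ => hprod0 i j)]
    exact Finset.sum_congr rfl fun j _ => pd_mul3' (hGx i j) (hpv 0) (hpv j) i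
  rw [keyA, keyB]
  simp only [Finset.sum_pair (by decide : (1 : Fin 3) ≠ 2)]
  simp only [hG00, hG00c, hG21, hcomm, hW0, hW1, hW2]
  ring


end
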